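/- Let s, x be complex numbers related by 64(2x−1)²·s = (s²−6s−3)², with s ∉ {0,1,9} and x ∉ {0,1}. Then (4/27)·(x²−x+1)³/(x²(x−1)²) = (1/12³)·(s+3)³((s−5)³+2⁷)³/(s(s−1)⁶(s−9)²). -/
import Mathlib

/-- Klein's invariant in the Legendre variable x agrees with its representation
through the Heun Hauptmodul s, related by 64(2x−1)²s = (s²−6s−3)². -/
theorem klein_J_identity (s x : ℂ) (hs0 : s ≠ 0) (hs1 : s ≠ 1) (hs9 : s ≠ 9)
    (hx0 : x ≠ 0) (hx1 : x ≠ 1)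
    (hrel : 64 * (2 * x - 1) ^ 2 * s = (s ^ 2 - 6 * s - 3) ^ 2) :
    (4 / 27) * (x ^ 2 - x + 1) ^ 3 / (x ^ 2 * (x - 1) ^ 2) =
      (1 / 12 ^ 3) * ((s + 3) ^ 3 * ((s - 5) ^ 3 + 2 ^ 7) ^ 3)
        / (s * (s - 1) ^ 6 * (s - 9) ^ 2) := by
  have h1 : s - 1 ≠ 0 := sub_ne_zero.mpr hs1
  have h9 : s - 9 ≠ 0 := sub_ne_zero.mpr hs9
  have ha : x ^ 2 - x + 1 = (s + 3) * ((s - 5) ^ 3 + 2 ^ 7) / (256 * s) := by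
    rw [eq_div_iff (by simp [hs0])]
    linear_combination hrel
  have hb : x ^ 2 * (x - 1) ^ 2 = ((s - 1) ^ 3 * (s - 9) / (256 * s)) ^ 2 := by
    rw [div_pow, eq_div_iff (by exact pow_ne_zero 2 (by simp [hs0]))]
    linear_combination (256 * s * (x * (x - 1)) + (s - 1) ^ 3 * (s - 9)) * hrel
  rw [ha, hb, div_eq_div_iff
    (pow_ne_zero 2 (div_ne_zero (mul_ne_zero (pow_ne_zero 3 h1) h9) (by simp [hs0])))
    (mul_ne_zero (mul_ne_zero hs0 (pow_ne_zero 6 h1)) (pow_ne_zero 2 h9))]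
  field_simp
  ring
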